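/- Let γ ∈ (0,1), K a bounded γ-Hölder probability density on ℝ^d, F : ℝ → ℝ C¹ with F′ bounded and Lipschitz. Define φ(f) := f · F(K*f). Then there is a constant C depending on F and K such that for all bounded γ-Hölder f, g ∈ L¹(ℝ^d): ‖φ(f) − φ(g)‖_{C^γ} ≤ C (1 + ‖f‖_{C^γ} + ‖g‖_{C^γ}) (1 + ‖f+g‖_{L¹}) ‖f − g‖_{C^γ}. -/

import Mathlib

open MeasureTheory Real Filter

abbrev Euc (d : ℕ) := EuclideanSpace ℝ (Fin d)

noncomputable def supN {E : Type*} (f : E → ℝ) : ℝ := ⨆ x, |f x|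

noncomputable def holdS {E : Type*} [NormedAddCommGroup E] (γ : ℝ) (f : E → ℝ) : ℝ :=
  ⨆ p : E × E, |f p.1 - f p.2| / ‖p.1 - p.2‖ ^ γ

noncomputable def cNorm {E : Type*} [NormedAddCommGroup E] (γ : ℝ) (f : E → ℝ) : ℝ :=
  supN f + holdS γ f

def IsHolderBdd {E : Type*} [NormedAddCommGroup E] (γ : ℝ) (f : E → ℝ) : Prop :=
  BddAbove (Set.range fun x => |f x|) ∧
  BddAbove (Set.range fun p : E × E => |f p.1 - f p.2| / ‖p.1 - p.2‖ ^ γ)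

/-!
Write `φ f - φ g = (f - g) · F (K * g) + f · (F (K * f) - F (K * g))`. Up to constants, the
`C^γ` norm is submultiplicative, convolution with `K` multiplies it by at most `‖K‖_{L¹}`, and
composition with the Lipschitz function `F` keeps it under control. The only delicate term is
`F (K * f) - F (K * g)`. Since `F p - F q = Φ ((p + q) / 2, (p - q) / 2)` with
`Φ (σ, w) = F (σ + w) - F (σ - w)`, its `γ`-Hölder quotient is at most `M` times that of
`K * (f - g)` plus `L ‖K * (f - g)‖_∞` times that of `K * (f + g)`; the latter is bounded by
`[K]_γ ‖f + g‖_{L¹}`, putting the Hölder regularity on the kernel.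
-/

section HolderBound

variable {E : Type*}

lemma supN_nonneg (u : E → ℝ) : 0 ≤ supN u :=
  Real.iSup_nonneg fun _ => abs_nonneg _

variable [NormedAddCommGroup E] {γ A B : ℝ} {u v : E → ℝ}

/-- A pointwise substitute for a bound on `cNorm γ u`: unlike the suprema in `cNorm`, it can be
manipulated without boundedness side conditions. -/
structure HolderBddWith (γ A : ℝ) (u : E → ℝ) : Prop where
  abs_le : ∀ x, |u x| ≤ A
  abs_sub_le : ∀ x y, |u x - u y| ≤ A * ‖x - y‖ ^ γ

lemma holdS_nonneg (γ : ℝ) (u : E → ℝ) : 0 ≤ holdS γ u :=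
  Real.iSup_nonneg fun _ => div_nonneg (abs_nonneg _) (Real.rpow_nonneg (norm_nonneg _) _)

lemma cNorm_nonneg (γ : ℝ) (u : E → ℝ) : 0 ≤ cNorm γ u :=
  add_nonneg (supN_nonneg u) (holdS_nonneg γ u)

lemma holderQuotient_le_of_abs_sub_le {C : ℝ} (hC : 0 ≤ C)
    (h : ∀ x y, |u x - u y| ≤ C * ‖x - y‖ ^ γ) (p : E × E) :
    |u p.1 - u p.2| / ‖p.1 - p.2‖ ^ γ ≤ C := by
  rcases (Real.rpow_nonneg (norm_nonneg (p.1 - p.2)) γ).eq_or_lt with hr | hr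
  · simp [← hr, hC]
  · exact div_le_of_le_mul₀ hr.le hC (by simpa [mul_comm] using h p.1 p.2)

lemma IsHolderBdd.holderBddWith_cNorm (hu : IsHolderBdd γ u) :
    HolderBddWith γ (cNorm γ u) u where
  abs_le x := (le_ciSup hu.1 x).trans (le_add_of_nonneg_right (holdS_nonneg γ u))
  abs_sub_le x y := by
    have hhold : |u x - u y| ≤ holdS γ u * ‖x - y‖ ^ γ := by
      rcases eq_or_ne x y with rfl | hxy
      · simpa using mul_nonneg (holdS_nonneg γ u) (Real.rpow_nonneg le_rfl γ)
      · have hr : 0 < ‖x - y‖ ^ γ :=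
          Real.rpow_pos_of_pos (norm_pos_iff.2 (sub_ne_zero.2 hxy)) _
        exact (div_le_iff₀ hr).1 (le_ciSup hu.2 (x, y))
    exact hhold.trans (mul_le_mul_of_nonneg_right (le_add_of_nonneg_left (supN_nonneg u))
      (Real.rpow_nonneg (norm_nonneg _) _))

namespace HolderBddWith

lemma isHolderBdd (hu : HolderBddWith γ A u) : IsHolderBdd γ u := by
  refine ⟨⟨A, Set.forall_mem_range.2 hu.abs_le⟩, ⟨A, Set.forall_mem_range.2 fun p => ?_⟩⟩
  exact holderQuotient_le_of_abs_sub_le ((abs_nonneg _).trans (hu.abs_le p.1)) hu.abs_sub_le p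

lemma mono (hu : HolderBddWith γ A u) (hAB : A ≤ B) : HolderBddWith γ B u where
  abs_le x := (hu.abs_le x).trans hAB
  abs_sub_le x y :=
    (hu.abs_sub_le x y).trans
      (mul_le_mul_of_nonneg_right hAB (Real.rpow_nonneg (norm_nonneg _) _))

lemma cNorm_le [Nonempty E] (hu : HolderBddWith γ A u) : cNorm γ u ≤ 2 * A := by
  have hA : 0 ≤ A := (abs_nonneg _).trans (hu.abs_le (Classical.arbitrary E))
  have hsup : supN u ≤ A := Real.iSup_le hu.abs_le hA
  have hhold : holdS γ u ≤ A :=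
    Real.iSup_le (holderQuotient_le_of_abs_sub_le hA hu.abs_sub_le) hA
  unfold cNorm
  linarith

lemma add (hu : HolderBddWith γ A u) (hv : HolderBddWith γ B v) :
    HolderBddWith γ (A + B) (fun x => u x + v x) where
  abs_le x := (abs_add_le _ _).trans (add_le_add (hu.abs_le x) (hv.abs_le x))
  abs_sub_le x y := by
    rw [add_sub_add_comm, add_mul]
    exact (abs_add_le _ _).trans (add_le_add (hu.abs_sub_le x y) (hv.abs_sub_le x y))

lemma sub (hu : HolderBddWith γ A u) (hv : HolderBddWith γ B v) :
    HolderBddWith γ (A + B) (fun x => u x - v x) where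
  abs_le x := (abs_sub _ _).trans (add_le_add (hu.abs_le x) (hv.abs_le x))
  abs_sub_le x y := by
    rw [sub_sub_sub_comm, add_mul]
    exact (abs_sub _ _).trans (add_le_add (hu.abs_sub_le x y) (hv.abs_sub_le x y))

lemma mul (hu : HolderBddWith γ A u) (hv : HolderBddWith γ B v) :
    HolderBddWith γ (2 * A * B) (fun x => u x * v x) where
  abs_le x := by
    have hA : 0 ≤ A := (abs_nonneg _).trans (hu.abs_le x)
    have hB : 0 ≤ B := (abs_nonneg _).trans (hv.abs_le x)
    rw [abs_mul]
    nlinarith [mul_le_mul (hu.abs_le x) (hv.abs_le x) (abs_nonneg _) hA]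
  abs_sub_le x y := by
    have hA : 0 ≤ A := (abs_nonneg _).trans (hu.abs_le x)
    have hr : 0 ≤ ‖x - y‖ ^ γ := Real.rpow_nonneg (norm_nonneg _) _
    have hsplit : u x * v x - u y * v y = (u x - u y) * v x + u y * (v x - v y) := by ring
    calc |u x * v x - u y * v y|
        ≤ |u x - u y| * |v x| + |u y| * |v x - v y| := by
          rw [hsplit, ← abs_mul, ← abs_mul]; exact abs_add_le _ _
      _ ≤ A * ‖x - y‖ ^ γ * B + A * (B * ‖x - y‖ ^ γ) :=
          add_le_add
            (mul_le_mul (hu.abs_sub_le x y) (hv.abs_le x) (abs_nonneg _) (mul_nonneg hA hr))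
            (mul_le_mul (hu.abs_le y) (hv.abs_sub_le x y) (abs_nonneg _) hA)
      _ = 2 * A * B * ‖x - y‖ ^ γ := by ring

lemma comp {F : ℝ → ℝ} {M : ℝ} (hM : 0 ≤ M) (hF : ∀ a b, |F a - F b| ≤ M * |a - b|)
    (hu : HolderBddWith γ A u) : HolderBddWith γ (|F 0| + M * A) (fun x => F (u x)) where
  abs_le x := by
    have := hF (u x) 0
    rw [sub_zero] at this
    nlinarith [abs_sub_abs_le_abs_sub (F (u x)) (F 0), hu.abs_le x]
  abs_sub_le x y := by
    have hr : 0 ≤ ‖x - y‖ ^ γ := Real.rpow_nonneg (norm_nonneg _) _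
    calc |F (u x) - F (u y)| ≤ M * (A * ‖x - y‖ ^ γ) :=
          (hF _ _).trans (mul_le_mul_of_nonneg_left (hu.abs_sub_le x y) hM)
      _ ≤ (|F 0| + M * A) * ‖x - y‖ ^ γ := by nlinarith [abs_nonneg (F 0)]

end HolderBddWith

end HolderBound

section Calculus

variable {F : ℝ → ℝ} {M : ℝ} {L : NNReal}

lemma abs_sub_le_of_hasDerivAt {G G' : ℝ → ℝ} {B : ℝ} (hG : ∀ t, HasDerivAt G (G' t) t)
    (hB : ∀ t, |G' t| ≤ B) (a b : ℝ) : |G a - G b| ≤ B * |a - b| :=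
  convex_univ.norm_image_sub_le_of_norm_hasDerivWithin_le (fun t _ => (hG t).hasDerivWithinAt)
    (fun t _ => hB t) (Set.mem_univ b) (Set.mem_univ a)

lemma abs_sub_le_of_abs_deriv_le (hF : Differentiable ℝ F) (hM : ∀ x, |deriv F x| ≤ M)
    (a b : ℝ) : |F a - F b| ≤ M * |a - b| :=
  abs_sub_le_of_hasDerivAt (fun t => (hF t).hasDerivAt) hM a b

lemma abs_sub_sub_sub_le_of_lipschitz_deriv (hF : Differentiable ℝ F)
    (hM : ∀ x, |deriv F x| ≤ M) (hL : LipschitzWith L (deriv F)) (p q p' q' : ℝ) :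
    |F p - F q - (F p' - F q')| ≤
      M * |(p - q) - (p' - q')| + L / 2 * |p' - q'| * |(p + q) - (p' + q')| := by
  set Φ : ℝ → ℝ → ℝ := fun σ w => F (σ + w) - F (σ - w)
  have hΦw : ∀ σ w, HasDerivAt (Φ σ) (deriv F (σ + w) + deriv F (σ - w)) w := fun σ w => by
    simpa only [sub_neg_eq_add] using ((hF _).hasDerivAt.comp_const_add σ w).fun_sub
      ((hF _).hasDerivAt.comp_const_sub σ w)
  have hΦσ : ∀ σ w, HasDerivAt (Φ · w) (deriv F (σ + w) - deriv F (σ - w)) σ :=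
    fun σ w =>
    ((hF _).hasDerivAt.comp_add_const σ w).sub ((hF _).hasDerivAt.comp_sub_const σ w)
  have hw : ∀ σ w w', |Φ σ w - Φ σ w'| ≤ 2 * M * |w - w'| := fun σ w w' =>
    abs_sub_le_of_hasDerivAt (hΦw σ) (fun t => by
      linarith [abs_add_le (deriv F (σ + t)) (deriv F (σ - t)), hM (σ + t), hM (σ - t)]) w w'
  have hσ : ∀ σ σ' w, |Φ σ w - Φ σ' w| ≤ 2 * L * |w| * |σ - σ'| := fun σ σ' w =>
    abs_sub_le_of_hasDerivAt (fun t => hΦσ t w) (fun t => by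
      have := hL.dist_le_mul (t + w) (t - w)
      rw [Real.dist_eq, Real.dist_eq, show t + w - (t - w) = 2 * w by ring, abs_mul,
        abs_two] at this
      linarith) σ σ'
  have hΦ : ∀ a b, F a - F b = Φ ((a + b) / 2) ((a - b) / 2) := fun a b => by
    simp only [Φ]; ring_nf
  have hhalf : ∀ a b : ℝ, |a / 2 - b / 2| = |a - b| / 2 := fun a b => by
    rw [← sub_div, abs_div, abs_two]
  calc |F p - F q - (F p' - F q')|
      ≤ |Φ ((p + q) / 2) ((p - q) / 2) - Φ ((p + q) / 2) ((p' - q') / 2)|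
        + |Φ ((p + q) / 2) ((p' - q') / 2) - Φ ((p' + q') / 2) ((p' - q') / 2)| := by
        rw [hΦ p q, hΦ p' q']; exact abs_sub_le _ _ _
    _ ≤ 2 * M * |(p - q) / 2 - (p' - q') / 2|
        + 2 * L * |(p' - q') / 2| * |(p + q) / 2 - (p' + q') / 2| :=
        add_le_add (hw _ _ _) (hσ _ _ _)
    _ = M * |(p - q) - (p' - q')| + L / 2 * |p' - q'| * |(p + q) - (p' + q')| := by
        rw [hhalf, hhalf, abs_div, abs_two]; ring

variable {E : Type*} [NormedAddCommGroup E] {γ A B : ℝ} {u v : E → ℝ}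

lemma HolderBddWith.comp_sub_comp (hF : Differentiable ℝ F) (hM : ∀ x, |deriv F x| ≤ M)
    (hL : LipschitzWith L (deriv F)) (huv : HolderBddWith γ A (fun x => u x - v x))
    (hB : 0 ≤ B) (hsum : ∀ x y, |(u x + v x) - (u y + v y)| ≤ B * ‖x - y‖ ^ γ) :
    HolderBddWith γ ((M + L / 2 * B) * A) (fun x => F (u x) - F (v x)) where
  abs_le x := by
    have hA : 0 ≤ A := (abs_nonneg _).trans (huv.abs_le x)
    have := abs_sub_le_of_abs_deriv_le hF hM (u x) (v x)
    nlinarith [mul_le_mul_of_nonneg_left (huv.abs_le x) ((abs_nonneg _).trans (hM 0)),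
      mul_nonneg (mul_nonneg L.coe_nonneg hB) hA]
  abs_sub_le x y := by
    have hA : 0 ≤ A := (abs_nonneg _).trans (huv.abs_le x)
    have hM0 : 0 ≤ M := (abs_nonneg _).trans (hM 0)
    calc |F (u x) - F (v x) - (F (u y) - F (v y))|
        ≤ M * |(u x - v x) - (u y - v y)|
          + L / 2 * |u y - v y| * |(u x + v x) - (u y + v y)| :=
          abs_sub_sub_sub_le_of_lipschitz_deriv hF hM hL _ _ _ _
      _ ≤ M * (A * ‖x - y‖ ^ γ) + L / 2 * A * (B * ‖x - y‖ ^ γ) := by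
          gcongr
          · exact huv.abs_sub_le x y
          · exact huv.abs_le y
          · exact hsum x y
      _ = (M + L / 2 * B) * A * ‖x - y‖ ^ γ := by ring

end Calculus

section Convolution

lemma abs_integral_le_of_abs_le {α : Type*} [MeasurableSpace α] {μ : Measure α}
    {f g : α → ℝ} (hg : Integrable g μ) (h : ∀ x, |f x| ≤ g x) :
    |∫ x, f x ∂μ| ≤ ∫ x, g x ∂μ :=
  norm_integral_le_of_norm_le (f := f) hg (ae_of_all _ h)

noncomputable def kernelConv {E : Type*} [Sub E] [MeasurableSpace E] (μ : Measure E)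
    (K h : E → ℝ) (x : E) : ℝ :=
  ∫ z, K (x - z) * h z ∂μ

variable {E : Type*} [NormedAddCommGroup E] [MeasurableSpace E] {μ : Measure E}
  {γ A B : ℝ} {K h h₁ h₂ : E → ℝ} {x : E} {F : ℝ → ℝ} {M : ℝ} {L : NNReal}

lemma kernelConv_add (hh₁ : Integrable (fun z => K (x - z) * h₁ z) μ)
    (hh₂ : Integrable (fun z => K (x - z) * h₂ z) μ) :
    kernelConv μ K (fun z => h₁ z + h₂ z) x =
      kernelConv μ K h₁ x + kernelConv μ K h₂ x := by
  simp only [kernelConv, mul_add]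
  exact integral_add hh₁ hh₂

lemma kernelConv_sub (hh₁ : Integrable (fun z => K (x - z) * h₁ z) μ)
    (hh₂ : Integrable (fun z => K (x - z) * h₂ z) μ) :
    kernelConv μ K (fun z => h₁ z - h₂ z) x =
      kernelConv μ K h₁ x - kernelConv μ K h₂ x := by
  simp only [kernelConv, mul_sub]
  exact integral_sub hh₁ hh₂

variable [MeasurableAdd E] [MeasurableNeg E] [μ.IsNegInvariant] [μ.IsAddLeftInvariant]

lemma integrable_kernel_mul (hK : Integrable K μ) (hh : AEStronglyMeasurable h μ)
    (hA : ∀ z, |h z| ≤ A) (x : E) : Integrable (fun z => K (x - z) * h z) μ :=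
  (hK.comp_sub_left x).mul_bdd hh (ae_of_all _ hA)

lemma kernelConv_eq_integral_mul_sub (K h : E → ℝ) (x : E) :
    kernelConv μ K h x = ∫ z, K z * h (x - z) ∂μ := by
  simpa [kernelConv] using integral_sub_left_eq_self (fun z => K z * h (x - z)) μ x

lemma HolderBddWith.kernelConv (hK : Integrable K μ) (hh : HolderBddWith γ A h)
    (hhm : AEStronglyMeasurable h μ) :
    HolderBddWith γ ((∫ z, |K z| ∂μ) * A) (kernelConv μ K h) where
  abs_le x := by
    rw [kernelConv_eq_integral_mul_sub, ← integral_mul_const A]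
    refine abs_integral_le_of_abs_le (hK.abs.mul_const A) fun z => ?_
    rw [abs_mul]
    exact mul_le_mul_of_nonneg_left (hh.abs_le _) (abs_nonneg _)
  abs_sub_le x y := by
    have hint : ∀ x, Integrable (fun z => K z * h (x - z)) μ := fun x => by
      simpa using (integrable_kernel_mul hK hhm hh.abs_le x).comp_sub_left x
    rw [kernelConv_eq_integral_mul_sub, kernelConv_eq_integral_mul_sub,
      ← integral_sub (hint x) (hint y), mul_assoc,
      ← integral_mul_const (A * ‖x - y‖ ^ γ)]
    refine abs_integral_le_of_abs_le (hK.abs.mul_const _) fun z => ?_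
    rw [← mul_sub, abs_mul]
    refine mul_le_mul_of_nonneg_left ?_ (abs_nonneg _)
    simpa [sub_sub_sub_cancel_right] using hh.abs_sub_le (x - z) (y - z)

lemma abs_kernelConv_sub_le_of_holder_kernel
    (hK : Integrable K μ) (hKB : ∀ x y, |K x - K y| ≤ B * ‖x - y‖ ^ γ)
    (hh : Integrable h μ) (hA : ∀ z, |h z| ≤ A) (x y : E) :
    |kernelConv μ K h x - kernelConv μ K h y| ≤
      B * (∫ z, |h z| ∂μ) * ‖x - y‖ ^ γ := by
  have hint := integrable_kernel_mul hK hh.aestronglyMeasurable hA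
  rw [kernelConv, kernelConv, ← integral_sub (hint x) (hint y), mul_right_comm,
    ← integral_const_mul (B * ‖x - y‖ ^ γ)]
  refine abs_integral_le_of_abs_le (hh.abs.const_mul _) fun z => ?_
  rw [← sub_mul, abs_mul, mul_comm B]
  refine mul_le_mul_of_nonneg_right ?_ (abs_nonneg _)
  simpa [sub_sub_sub_cancel_right, mul_comm] using hKB (x - z) (y - z)

lemma holderBddWith_comp_kernelConv_sub_comp_kernelConv {f g : E → ℝ} {a b δ : ℝ}
    (hK : Integrable K μ) (hKB : ∀ x y, |K x - K y| ≤ B * ‖x - y‖ ^ γ) (hB : 0 ≤ B)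
    (hF : Differentiable ℝ F) (hM : ∀ x, |deriv F x| ≤ M) (hL : LipschitzWith L (deriv F))
    (hf : HolderBddWith γ a f) (hg : HolderBddWith γ b g)
    (hfg : HolderBddWith γ δ (fun x => f x - g x))
    (hfi : Integrable f μ) (hgi : Integrable g μ) :
    HolderBddWith γ ((M + L / 2 * (B * ∫ x, |f x + g x| ∂μ)) * ((∫ z, |K z| ∂μ) * δ))
      (fun x => F (kernelConv μ K f x) - F (kernelConv μ K g x)) := by
  have hfK := integrable_kernel_mul hK hfi.aestronglyMeasurable hf.abs_le
  have hgK := integrable_kernel_mul hK hgi.aestronglyMeasurable hg.abs_le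
  have hdiff : HolderBddWith γ ((∫ z, |K z| ∂μ) * δ)
      (fun x => kernelConv μ K f x - kernelConv μ K g x) := by
    rw [show (fun x => kernelConv μ K f x - kernelConv μ K g x) =
        kernelConv μ K (fun z => f z - g z) from
      funext fun x => (kernelConv_sub (hfK x) (hgK x)).symm]
    exact hfg.kernelConv hK (hfi.sub hgi).aestronglyMeasurable
  have hsum : ∀ x y, |(kernelConv μ K f x + kernelConv μ K g x) -
      (kernelConv μ K f y + kernelConv μ K g y)| ≤
        (B * ∫ x, |f x + g x| ∂μ) * ‖x - y‖ ^ γ := fun x y => by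
    rw [← kernelConv_add (hfK x) (hgK x), ← kernelConv_add (hfK y) (hgK y)]
    exact abs_kernelConv_sub_le_of_holder_kernel (h := fun z => f z + g z) hK hKB
      (hfi.add hgi) (hf.add hg).abs_le x y
  exact hdiff.comp_sub_comp hF hM hL (mul_nonneg hB (integral_nonneg fun _ => abs_nonneg _)) hsum

lemma holderBddWith_mul_comp_kernelConv_sub [Nonempty E] {f g : E → ℝ} {a b δ : ℝ}
    (hK : Integrable K μ) (hKB : ∀ x y, |K x - K y| ≤ B * ‖x - y‖ ^ γ) (hB : 0 ≤ B)
    (hF : Differentiable ℝ F) (hM : ∀ x, |deriv F x| ≤ M) (hL : LipschitzWith L (deriv F))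
    (hf : HolderBddWith γ a f) (hg : HolderBddWith γ b g)
    (hfg : HolderBddWith γ δ (fun x => f x - g x))
    (hfi : Integrable f μ) (hgi : Integrable g μ) :
    HolderBddWith γ ((2 * |F 0| + 2 * M * (∫ z, |K z| ∂μ) + L * B * (∫ z, |K z| ∂μ)) *
        (1 + a + b) * (1 + ∫ x, |f x + g x| ∂μ) * δ)
      (fun x => f x * F (kernelConv μ K f x) - g x * F (kernelConv μ K g x)) := by
  set κ := ∫ z, |K z| ∂μ
  set I := ∫ x, |f x + g x| ∂μ
  have hsplit : (fun x => f x * F (kernelConv μ K f x) - g x * F (kernelConv μ K g x)) =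
      fun x => (f x - g x) * F (kernelConv μ K g x) +
        f x * (F (kernelConv μ K f x) - F (kernelConv μ K g x)) :=
    funext fun x => by ring
  have hM0 : 0 ≤ M := (abs_nonneg _).trans (hM 0)
  rw [hsplit]
  have hW := (hg.kernelConv hK hgi.aestronglyMeasurable).comp hM0
    (abs_sub_le_of_abs_deriv_le hF hM)
  have hD := holderBddWith_comp_kernelConv_sub_comp_kernelConv hK hKB hB hF hM hL hf hg hfg hfi hgi
  refine ((hfg.mul hW).add (hf.mul hD)).mono ?_
  obtain ⟨x₀⟩ := ‹Nonempty E›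
  have ha : 0 ≤ a := (abs_nonneg _).trans (hf.abs_le x₀)
  have hb : 0 ≤ b := (abs_nonneg _).trans (hg.abs_le x₀)
  have hδ : 0 ≤ δ := (abs_nonneg _).trans (hfg.abs_le x₀)
  have hκ : 0 ≤ κ := integral_nonneg fun _ => abs_nonneg _
  have hI : 0 ≤ I := integral_nonneg fun _ => abs_nonneg _
  have hP : 1 ≤ (1 + a + b) * (1 + I) := by nlinarith
  have habP : a + b ≤ (1 + a + b) * (1 + I) := by nlinarith
  have haIP : a * I ≤ (1 + a + b) * (1 + I) := by nlinarith
  calc _ = (2 * |F 0| + 2 * M * κ * (a + b) + L * B * κ * (a * I)) * δ := by ring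
    _ ≤ (2 * |F 0| + 2 * M * κ + L * B * κ) * ((1 + a + b) * (1 + I)) * δ := by
        gcongr ?_ * δ
        nlinarith [mul_le_mul_of_nonneg_left habP (by positivity : 0 ≤ 2 * M * κ),
          mul_le_mul_of_nonneg_left haIP (by positivity : 0 ≤ L * B * κ),
          mul_le_mul_of_nonneg_left hP (by positivity : 0 ≤ 2 * |F 0|)]
    _ = _ := by ring

end Convolution

theorem stmt6_general {d : ℕ} (γ : ℝ)
    (K : Euc d → ℝ) (hKint : Integrable K) (hKH : IsHolderBdd γ K)
    (F : ℝ → ℝ) (hF : ContDiff ℝ 1 F) (M : ℝ) (hM : ∀ x, |deriv F x| ≤ M)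
    (L : NNReal) (hL : LipschitzWith L (deriv F)) :
    ∃ C > 0, ∀ f g : Euc d → ℝ,
      IsHolderBdd γ f → IsHolderBdd γ g → Integrable f → Integrable g →
      cNorm γ (fun x => f x * F (∫ z, K (x - z) * f z)
                        - g x * F (∫ z, K (x - z) * g z)) ≤
        C * (1 + cNorm γ f + cNorm γ g) * (1 + ∫ x, |f x + g x|) *
          cNorm γ (fun x => f x - g x) := by
  set C₀ := 2 * |F 0| + 2 * M * (∫ z, |K z|) + L * cNorm γ K * (∫ z, |K z|)
  have hC₀ : 0 ≤ C₀ := by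
    have hM0 := (abs_nonneg _).trans (hM 0)
    have hCK := cNorm_nonneg γ K
    positivity
  refine ⟨2 * C₀ + 1, by positivity, fun f g hf hg hfi hgi => ?_⟩
  have hf' := hf.holderBddWith_cNorm
  have hg' := hg.holderBddWith_cNorm
  have hφ := holderBddWith_mul_comp_kernelConv_sub hKint hKH.holderBddWith_cNorm.abs_sub_le
    (cNorm_nonneg γ K) (hF.differentiable one_ne_zero) hM hL hf' hg'
    (hf'.sub hg').isHolderBdd.holderBddWith_cNorm hfi hgi
  have hcf := cNorm_nonneg γ f
  have hcg := cNorm_nonneg γ g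
  have hδ := cNorm_nonneg γ (fun x => f x - g x)
  have hX : 0 ≤ (1 + cNorm γ f + cNorm γ g) * (1 + ∫ x, |f x + g x|) *
      cNorm γ (fun x => f x - g x) := by positivity
  calc _ ≤ 2 * (C₀ * (1 + cNorm γ f + cNorm γ g) * (1 + ∫ x, |f x + g x|) *
        cNorm γ (fun x => f x - g x)) := hφ.cNorm_le
    _ ≤ _ := by nlinarith

/-- local Lipschitz property of φ(f) = f·F(K*f) in the
Hölder–Zygmund norm. -/
theorem stmt6 {d : ℕ} (γ : ℝ) (hγ : γ ∈ Set.Ioo (0:ℝ) 1)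
    (K : Euc d → ℝ) (hK0 : ∀ x, 0 ≤ K x) (hKint : Integrable K)
    (hK1 : (∫ x, K x) = 1) (hKH : IsHolderBdd γ K)
    (F : ℝ → ℝ) (hF : ContDiff ℝ 1 F) (M : ℝ) (hM : ∀ x, |deriv F x| ≤ M)
    (L : NNReal) (hL : LipschitzWith L (deriv F)) :
    ∃ C > 0, ∀ f g : Euc d → ℝ,
      IsHolderBdd γ f → IsHolderBdd γ g → Integrable f → Integrable g →
      cNorm γ (fun x => f x * F (∫ z, K (x - z) * f z)
                        - g x * F (∫ z, K (x - z) * g z)) ≤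
        C * (1 + cNorm γ f + cNorm γ g) * (1 + ∫ x, |f x + g x|) *
          cNorm γ (fun x => f x - g x) :=
  stmt6_general γ K hKint hKH F hF M hM L hL
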